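/- arXiv:2207.03354 — 3 statements merged into one kernel-verified Lean document; each statement's English description precedes it below -/
import Mathlib

section
/- Let f ∈ Λ. If there exists N ∈ ℕ such that π_C^(n)(f) = 0 for all n ≥ N, then f = 0. -/
open MvPolynomial

noncomputable section

/-- The ring of symmetric functions, realized as polynomials in the power sums
`p₁, p₂, …`; the variable `X r` represents `p_{r+1}`. -/
abbrev SymF : Type := MvPolynomial ℕ ℚ

/-- Laurent polynomials in `k` variables. -/
abbrev Laur (k : ℕ) : Type := AddMonoidAlgebra ℚ (Fin k →₀ ℤ)

/-- The Laurent monomial `x_i ^ z`. -/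
def lX {k : ℕ} (i : Fin k) (z : ℤ) : Laur k :=
  AddMonoidAlgebra.single (Finsupp.single i z) 1

/-- `π_C^{(n)} : Λ → ℚ[x₁^{±1},…,xₙ^{±1}]`, `p_r ↦ Σᵢ (x_i^r + x_i^{-r})`. -/
def piC (n : ℕ) : SymF →ₐ[ℚ] Laur n :=
  aeval fun r => ∑ i : Fin n, (lX i ((r : ℤ) + 1) + lX i (-((r : ℤ) + 1)))

/-!
Only finitely many `p_r` occur in `f`, so it suffices that for every `n` the images of
`p₁, …, pₙ` under `π_C^(n)` are algebraically independent. Specialize `x_i` to a unit `u_i` of an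
algebraically closed field with `u_i + u_i⁻¹ = z_i`, where `z₁, …, zₙ` are algebraically
independent. Then `p_r ↦ Σᵢ D_r(z_i)` with `D_r` the Dickson polynomial,
`D_r(x + x⁻¹) = x^r + x^{-r}`, which is monic of degree `r`. By triangularity the `Σᵢ D_r(z_i)`,
`r ≤ n`, generate the power sums of the `z_i`, hence (Newton's identities, characteristic zero)
their elementary symmetric functions, over which each `z_i` is integral. So `ℚ[z₁, …, zₙ]`, of
transcendence degree `n`, is algebraic over the algebra generated by these `n` elements, which are
therefore a transcendence basis.
-/

open scoped Polynomial

namespace Polynomial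

theorem monic_dickson_one_one_and_natDegree {R : Type*} [CommRing R] [Nontrivial R] :
    ∀ {k : ℕ}, k ≠ 0 → (dickson 1 (1 : R) k).Monic ∧ (dickson 1 (1 : R) k).natDegree = k
  | 1, _ => by simp
  | 2, _ => by
    rw [dickson_two]
    exact ⟨by monicity!, by compute_degree!⟩
  | k + 3, _ => by
    obtain ⟨hmonic₁, hdeg₁⟩ := monic_dickson_one_one_and_natDegree (R := R) (k := k + 2) (by omega)
    obtain ⟨-, hdeg₂⟩ := monic_dickson_one_one_and_natDegree (R := R) (k := k + 1) (by omega)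
    have hXdeg : (X * dickson 1 (1 : R) (k + 2)).natDegree = k + 3 := by
      rw [monic_X.natDegree_mul hmonic₁, natDegree_X, hdeg₁]; ring
    have hlt : (dickson 1 (1 : R) (k + 1)).natDegree <
        (X * dickson 1 (1 : R) (k + 2)).natDegree := by
      omega
    rw [dickson_add_two, C_1, one_mul]
    exact ⟨(monic_X.mul hmonic₁).sub_of_left (degree_lt_degree hlt),
      by rw [natDegree_sub_eq_left_of_natDegree_lt hlt, hXdeg]⟩

end Polynomial

namespace MvPolynomial

section Symmetric

variable {σ R : Type*} [Fintype σ] [CommRing R]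

theorem sum_aeval_X_eq_sum_coeff_smul_psum (p : R[X]) :
    ∑ i, Polynomial.aeval (X i : MvPolynomial σ R) p =
      ∑ d ∈ Finset.range (p.natDegree + 1), p.coeff d • psum σ R d := by
  simp_rw [Polynomial.aeval_eq_sum_range, psum, Finset.smul_sum]
  exact Finset.sum_comm

theorem psum_mem_of_sum_aeval_mem {S : Subalgebra R (MvPolynomial σ R)} {P : ℕ → R[X]} {n : ℕ}
    (hP : ∀ k, k ≠ 0 → (P k).Monic ∧ (P k).natDegree = k)
    (hS : ∀ k, k ≠ 0 → k ≤ n → ∑ i, Polynomial.aeval (X i) (P k) ∈ S) :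
    ∀ k ≤ n, psum σ R k ∈ S := by
  intro k
  induction k using Nat.strong_induction_on with
  | _ k ih =>
    intro hkn
    rcases eq_or_ne k 0 with rfl | hk
    · rw [psum_zero]
      exact S.natCast_mem _
    obtain ⟨hmonic, hdeg⟩ := hP k hk
    have hlead : (P k).coeff k = 1 := by simpa [hdeg] using hmonic.coeff_natDegree
    have hsum := sum_aeval_X_eq_sum_coeff_smul_psum (σ := σ) (P k)
    rw [hdeg, Finset.sum_range_succ, hlead, one_smul] at hsum
    rw [eq_sub_of_add_eq' hsum.symm]
    exact S.sub_mem (hS k hk hkn) <| S.sum_mem fun d hd =>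
      S.smul_mem (ih d (Finset.mem_range.1 hd) (by grind)) _

theorem esymm_mem_of_psum_mem {K : Type*} [Field K] [CharZero K]
    {S : Subalgebra K (MvPolynomial σ K)} {n : ℕ} (hS : ∀ k ≤ n, psum σ K k ∈ S) :
    ∀ k ≤ n, esymm σ K k ∈ S := by
  intro k
  induction k using Nat.strong_induction_on with
  | _ k ih =>
    intro hkn
    rcases eq_or_ne k 0 with rfl | hk
    · rw [esymm_zero]
      exact S.one_mem
    have hdiv : esymm σ K k = (k : K)⁻¹ • ((k : MvPolynomial σ K) * esymm σ K k) := by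
      rw [← map_natCast (algebraMap K (MvPolynomial σ K)), ← Algebra.smul_def, smul_smul,
        inv_mul_cancel₀ (Nat.cast_ne_zero.2 hk), one_smul]
    rw [hdiv, mul_esymm_eq_sum]
    refine S.smul_mem (S.mul_mem (S.pow_mem (S.neg_mem S.one_mem) _) (S.sum_mem fun a ha => ?_)) _
    simp only [Finset.mem_filter, Finset.HasAntidiagonal.mem_antidiagonal] at ha
    exact S.mul_mem (S.mul_mem (S.pow_mem (S.neg_mem S.one_mem) _) (ih _ ha.2 (by omega)))
      (hS _ (by omega))

theorem isIntegral_X_of_esymm_mem {S : Subalgebra R (MvPolynomial σ R)}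
    (hS : ∀ k ≤ Fintype.card σ, esymm σ R k ∈ S) (i : σ) :
    IsIntegral S (X i : MvPolynomial σ R) := by
  set p : (MvPolynomial σ R)[X] := ∏ j, (Polynomial.X + Polynomial.C (X j))
  have hmonic : p.Monic :=
    Polynomial.monic_prod_of_monic _ _ fun j _ => Polynomial.monic_X_add_C _
  have hdeg : p.natDegree ≤ Fintype.card σ :=
    (Polynomial.natDegree_prod_le _ _).trans <| by
      simpa using Nat.mul_le_mul_left (Fintype.card σ) Polynomial.natDegree_X_le
  have hlifts : p ∈ Polynomial.lifts (algebraMap S (MvPolynomial σ R)) := by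
    refine (Polynomial.lifts_iff_coeff_lifts p).2 fun k => ?_
    rcases le_or_gt k (Fintype.card σ) with hk | hk
    · rw [prod_X_add_C_coeff R σ k hk]
      exact ⟨⟨_, hS _ (Nat.sub_le _ _)⟩, rfl⟩
    · rw [Polynomial.coeff_eq_zero_of_natDegree_lt (hdeg.trans_lt hk)]
      exact ⟨0, map_zero _⟩
  obtain ⟨q, hq, -, hqmonic⟩ := Polynomial.lifts_and_natDegree_eq_and_monic hlifts hmonic
  have hroot : IsIntegral S (-X i : MvPolynomial σ R) := by
    refine ⟨q, hqmonic, ?_⟩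
    rw [← Polynomial.eval_map, hq, Polynomial.eval_prod]
    exact Finset.prod_eq_zero (Finset.mem_univ i) (by simp)
  simpa using hroot.neg

end Symmetric

theorem isIntegral_of_isIntegral_X {σ R : Type*} [CommRing R]
    {S : Subalgebra R (MvPolynomial σ R)} (hX : ∀ i, IsIntegral S (X i : MvPolynomial σ R)) :
    Algebra.IsIntegral S (MvPolynomial σ R) :=
  ⟨fun p => by
    induction p using MvPolynomial.induction_on with
    | C a => exact isIntegral_algebraMap (x := algebraMap R S a)
    | add p q hp hq => exact hp.add hq
    | mul_X p i hp => exact hp.mul (hX i)⟩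

theorem algebraicIndependent_of_isAlgebraic_adjoin {σ K : Type*} [Finite σ] [Field K]
    (x : σ → MvPolynomial σ K)
    [Algebra.IsAlgebraic (Algebra.adjoin K (Set.range x)) (MvPolynomial σ K)] :
    AlgebraicIndependent K x :=
  (Algebra.IsAlgebraic.isTranscendenceBasis_of_lift_le_trdeg_of_finite K x
    (by simp [MvPolynomial.trdeg_of_isDomain])).1

def sumDickson (σ R : Type*) [Fintype σ] [CommRing R] (k : ℕ) : MvPolynomial σ R :=
  ∑ i, Polynomial.aeval (X i) (Polynomial.dickson 1 (1 : R) k)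

theorem algebraicIndependent_sumDickson (K : Type*) [Field K] [CharZero K] (n : ℕ) :
    AlgebraicIndependent K fun k : Fin n => sumDickson (Fin n) K (k + 1) := by
  set S := Algebra.adjoin K (Set.range fun k : Fin n => sumDickson (Fin n) K (k + 1))
  have hpsum : ∀ k ≤ n, psum (Fin n) K k ∈ S :=
    psum_mem_of_sum_aeval_mem (fun k hk => Polynomial.monic_dickson_one_one_and_natDegree hk)
      fun k hk hkn => Algebra.subset_adjoin ⟨⟨k - 1, by omega⟩, by
        simp only [Nat.sub_add_cancel (Nat.pos_of_ne_zero hk)]; rfl⟩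
  have : Algebra.IsIntegral S (MvPolynomial (Fin n) K) :=
    isIntegral_of_isIntegral_X <|
      isIntegral_X_of_esymm_mem (by simpa using esymm_mem_of_psum_mem hpsum)
  exact algebraicIndependent_of_isAlgebraic_adjoin _

end MvPolynomial

namespace Laur

variable {B : Type*} [CommRing B] [Algebra ℚ B]

def aeval {k : ℕ} (u : Fin k → Bˣ) : Laur k →ₐ[ℚ] B :=
  AddMonoidAlgebra.lift ℚ B (Fin k →₀ ℤ) <| (Units.coeHom B).comp <|
    AddMonoidHom.toMultiplicativeLeft <| Finsupp.liftAddHom fun i =>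
      zmultiplesHom (Additive Bˣ) (Additive.ofMul (u i))

@[simp]
theorem aeval_lX {k : ℕ} (u : Fin k → Bˣ) (i : Fin k) (z : ℤ) :
    aeval u (lX i z) = ((u i ^ z : Bˣ) : B) := by
  simp [aeval, lX]

theorem aeval_comp_piC {n : ℕ} (u : Fin n → Bˣ) :
    (aeval u).comp (piC n) = MvPolynomial.aeval fun r =>
      MvPolynomial.aeval (fun i => (u i : B) + ↑(u i)⁻¹) (sumDickson (Fin n) ℚ (r + 1)) := by
  refine MvPolynomial.algHom_ext fun r => ?_
  simp only [AlgHom.comp_apply, piC, sumDickson, MvPolynomial.aeval_X, map_sum, map_add,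
    aeval_lX]
  refine Finset.sum_congr rfl fun i _ => ?_
  rw [← Polynomial.aeval_algHom_apply, MvPolynomial.aeval_X, Polynomial.aeval_def,
    Polynomial.eval₂_eq_eval_map, Polynomial.map_dickson, map_one,
    Polynomial.dickson_one_one_eval_add_inv _ _ (u i).mul_inv]
  norm_cast

end Laur

theorem IsAlgClosed.exists_units_add_inv_eq {K : Type*} [Field K] [IsAlgClosed K] (z : K) :
    ∃ u : Kˣ, (u : K) + ↑u⁻¹ = z := by
  obtain ⟨u, hu⟩ := IsAlgClosed.exists_root
    (Polynomial.C 1 * Polynomial.X ^ 2 + Polynomial.C (-z) * Polynomial.X + Polynomial.C 1)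
    (by rw [Polynomial.degree_quadratic one_ne_zero]; decide)
  simp only [Polynomial.IsRoot, Polynomial.eval_add, Polynomial.eval_mul, Polynomial.eval_pow,
    Polynomial.eval_C, Polynomial.eval_X] at hu
  have hu0 : u ≠ 0 := by rintro rfl; simp at hu
  refine ⟨Units.mk0 u hu0, ?_⟩
  rw [Units.val_inv_eq_inv_val, Units.val_mk0]
  field_simp
  linear_combination hu

theorem algebraicIndependent_piC_X (n : ℕ) :
    AlgebraicIndependent ℚ fun r : Fin n => piC n (X r) := by
  let K := AlgebraicClosure (FractionRing (MvPolynomial (Fin n) ℚ))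
  let z : Fin n → K := fun i => algebraMap (MvPolynomial (Fin n) ℚ) K (X i)
  have hinj : Function.Injective (algebraMap (MvPolynomial (Fin n) ℚ) K) := by
    rw [IsScalarTower.algebraMap_eq _ (FractionRing (MvPolynomial (Fin n) ℚ)) K]
    exact (algebraMap (FractionRing (MvPolynomial (Fin n) ℚ)) K).injective.comp
      (IsFractionRing.injective _ _)
  have hz : AlgebraicIndependent ℚ z :=
    (MvPolynomial.algebraicIndependent_X (Fin n) ℚ).map'
      (f := IsScalarTower.toAlgHom ℚ (MvPolynomial (Fin n) ℚ) K) hinj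
  choose u hu using fun i => IsAlgClosed.exists_units_add_inv_eq (z i)
  refine .of_comp (Laur.aeval u) ?_
  have hspec : (Laur.aeval u ∘ fun r : Fin n => piC n (X r)) =
      fun r : Fin n => MvPolynomial.aeval z (sumDickson (Fin n) ℚ (r + 1)) := by
    ext r
    rw [Function.comp_apply, ← AlgHom.comp_apply, Laur.aeval_comp_piC, MvPolynomial.aeval_X,
      funext hu]
  rw [hspec]
  exact hz.aeval_of_algebraicIndependent (MvPolynomial.algebraicIndependent_sumDickson ℚ n)

/-- If `π_C^{(n)}(f) = 0` for all large `n`, then `f = 0`. -/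
theorem piC_eventually_zero_imp_zero (f : SymF)
    (h : ∃ N : ℕ, ∀ n : ℕ, N ≤ n → piC n f = 0) : f = 0 := by
  obtain ⟨N, hN⟩ := h
  obtain ⟨m, ι, hι, g, rfl⟩ := exists_fin_rename f
  obtain ⟨b, hb⟩ := (Set.finite_range ι).bddAbove
  set n := max N (b + 1)
  have hιn : ∀ k, ι k < n := fun k => (hb ⟨k, rfl⟩).trans_lt (by omega)
  let j : Fin m → Fin n := fun k => ⟨ι k, hιn k⟩
  have hind := (algebraicIndependent_piC_X n).comp j fun a b hab => hι (congrArg Fin.val hab)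
  have h0 := hN n (le_max_left _ _)
  rw [aeval_unique (piC n), aeval_rename] at h0
  rw [hind.eq_zero_of_aeval_eq_zero g h0, map_zero]

end
end

section
/- Let f ∈ Λ(X|Y). If there exists N ∈ ℕ such that π^{(k,m)}(f) = 0 for all k ≥ N and all m ≥ N, then f = 0. -/
/-!
A given `f` involves only `p_r ⊗ 1`, `1 ⊗ p_r` with `r ≤ n` for some `n`, and their images under
`π^{(k,m)}` are algebraically independent over `ℚ` once `k ≥ 2n + 1` and `m ≥ n`. Through the
tower `ℚ ⊂ Laur k ⊂ IRing k m` this splits into the independence of the Laurent power sums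
`Σ_i (x_i^r + x_i^{-r})` over `ℚ` and of the power sums `p_1, …, p_n` over `Laur k`. Both follow
from the Jacobian criterion in characteristic zero: if `g(v) = 0` with `g` of minimal degree, a
derivation `D` gives `Σ_r (∂_r g)(v) · D(v_r) = 0`, so if the rows `(D_i v_r)_i` are linearly
independent then `(∂_r g)(v) = 0`, hence every `∂_r g` vanishes and `g` is constant. For the Euler
derivations `x_i ∂/∂x_i` the linear independence comes from a polynomial of too small degree
vanishing at every `x_i`.
-/

open MvPolynomial

noncomputable section

/-- `Λ(X|Y) = Λ ⊗_ℚ Λ`, realized as polynomials in the two families of power sums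
`p_r ⊗ 1 = X (inl (r-1))` and `1 ⊗ p_r = X (inr (r-1))`. -/
abbrev SymF2 : Type := MvPolynomial (ℕ ⊕ ℕ) ℚ

/-- `ℚ[x₁^{±1},…,x_k^{±1}][x_{k+1},…,x_{k+m}]`. -/
abbrev IRing (k m : ℕ) : Type := MvPolynomial (Fin m) (Laur k)

/-- `π^{(k,m)} : Λ(X|Y) → ℚ[x₁^{±1},…,x_k^{±1}][x_{k+1},…,x_{k+m}]`, sending
`p_r ⊗ 1 ↦ Σ_{i=1}^k (x_i^r + x_i^{−r})` and `1 ⊗ p_r ↦ Σ_{j=k+1}^{k+m} x_j^r`. -/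
def piI (k m : ℕ) : SymF2 →ₐ[ℚ] IRing k m :=
  aeval fun s => match s with
    | Sum.inl r => C (∑ i : Fin k, (lX i ((r : ℤ) + 1) + lX i (-((r : ℤ) + 1))))
    | Sum.inr r => ∑ j : Fin m, X j ^ (r + 1)

theorem isUnit_natCast_add_one (A : Type*) [Semiring A] [Algebra ℚ A] (n : ℕ) :
    IsUnit ((n : A) + 1) := by
  simpa using (IsUnit.mk0 _ (n.cast_add_one_ne_zero : (n : ℚ) + 1 ≠ 0)).map (algebraMap ℚ A)

namespace MvPolynomial

variable {R σ : Type*} [CommRing R]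

theorem totalDegree_pderiv_lt (i : σ) {p : MvPolynomial σ R} (hp : 0 < p.totalDegree) :
    (pderiv i p).totalDegree < p.totalDegree := by
  classical
  rw [totalDegree, Finset.sup_lt_iff (by simpa using hp)]
  intro d hd
  rw [mem_support_iff, coeff_pderiv] at hd
  have hle := le_totalDegree (mem_support_iff.2 (left_ne_zero_of_mul hd))
  rw [Finsupp.sum_add_index' (fun _ => rfl) (fun _ _ _ => rfl), Finsupp.sum_single_index rfl]
    at hle
  omega

theorem eq_C_of_forall_pderiv_eq_zero [Algebra ℚ R] {p : MvPolynomial σ R}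
    (h : ∀ i, pderiv i p = 0) : p = C (coeff 0 p) := by
  classical
  ext d
  rw [coeff_C]
  split_ifs with hd
  · rw [hd]
  obtain ⟨i, hi⟩ := Finsupp.support_nonempty_iff.2 (Ne.symm hd)
  have hle : Finsupp.single i 1 ≤ d :=
    Finsupp.single_le_iff.2 (Nat.one_le_iff_ne_zero.2 (Finsupp.mem_support_iff.1 hi))
  have hcoeff := coeff_pderiv (i := i) p (d - Finsupp.single i 1)
  rw [h i, coeff_zero, tsub_add_cancel_of_le hle] at hcoeff
  exact (isUnit_natCast_add_one R _).mul_left_eq_zero.1 hcoeff.symm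

end MvPolynomial

theorem Derivation.map_aeval_mvPolynomial {R A σ : Type*} [CommRing R] [CommRing A] [Algebra R A]
    [Fintype σ] (D : Derivation R A A) (v : σ → A) (p : MvPolynomial σ R) :
    D (aeval v p) = ∑ i, aeval v (pderiv i p) * D (v i) := by
  classical
  induction p using MvPolynomial.induction_on with
  | C a => simp
  | add p q hp hq => simp only [map_add, hp, hq, add_mul, Finset.sum_add_distrib]
  | mul_X p j hp =>
    simp only [map_mul, aeval_X, Derivation.leibniz, smul_eq_mul, hp, pderiv_X, Pi.single_apply,
      mul_ite, mul_one, mul_zero, map_add, add_mul, Finset.sum_add_distrib, apply_ite (aeval v),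
      map_zero, ite_mul, zero_mul, Finset.sum_ite_eq, Finset.mem_univ, if_true, Finset.mul_sum,
      mul_assoc]

theorem algebraicIndependent_of_linearIndependent_derivations {R A σ ι : Type*} [CommRing R]
    [Algebra ℚ R] [CommRing A] [Algebra R A] [Fintype σ]
    (hinj : Function.Injective (algebraMap R A)) (v : σ → A) (D : ι → Derivation R A A)
    (hD : LinearIndependent A fun s i => D i (v s)) : AlgebraicIndependent R v := by
  rw [algebraicIndependent_iff]
  intro p
  induction hn : p.totalDegree using Nat.strong_induction_on generalizing p with
  | _ n ih =>
  intro hp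
  suffices hC : p = C (coeff 0 p) by
    rw [hC, aeval_C, ← map_zero (algebraMap R A)] at hp
    rw [hC, hinj hp, C_0]
  obtain h0 | hpos := Nat.eq_zero_or_pos p.totalDegree
  · exact totalDegree_eq_zero_iff_eq_C.1 h0
  refine eq_C_of_forall_pderiv_eq_zero fun s => ih _ (hn ▸ totalDegree_pderiv_lt s hpos) _ rfl ?_
  refine Fintype.linearIndependent_iff.1 hD (fun s => aeval v (pderiv s p)) (funext fun i => ?_) s
  simpa [Derivation.map_aeval_mvPolynomial] using congrArg (D i) hp

theorem X_mul_pderiv_psum {R σ : Type*} [CommRing R] [Fintype σ] (j : σ) (n : ℕ) :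
    X j * pderiv j (psum σ R (n + 1)) = ((n : MvPolynomial σ R) + 1) * X j ^ (n + 1) := by
  classical
  simp [psum, pderiv_X, Pi.single_apply]
  ring

theorem algebraicIndependent_psum {R : Type*} [CommRing R] [IsDomain R] [Algebra ℚ R] {n m : ℕ}
    (h : n ≤ m) : AlgebraicIndependent R fun r : Fin n => psum (Fin m) R (r + 1) := by
  refine algebraicIndependent_of_linearIndependent_derivations (C_injective _ _) _
    (fun j : Fin m => ((X j : MvPolynomial (Fin m) R) • pderiv j : Derivation R _ _))
    (Fintype.linearIndependent_iff.2 fun c hc => ?_)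
  -- the `j`-th equation, divided by `x_j`, for the first `n` variables: a Vandermonde system
  have hroots : ∀ j : Fin n, ∑ r : Fin n,
      c r * (((r : ℕ) : MvPolynomial (Fin m) R) + 1) * X (Fin.castLE h j) ^ (r : ℕ) = 0 := by
    intro j
    have hj := congrFun hc (Fin.castLE h j)
    simp only [Finset.sum_apply, Pi.smul_apply, Derivation.smul_apply, smul_eq_mul,
      X_mul_pderiv_psum, Pi.zero_apply] at hj
    refine (mul_eq_zero.1 ?_).resolve_left (X_ne_zero (Fin.castLE h j))
    rw [← hj, Finset.mul_sum]
    exact Finset.sum_congr rfl fun r _ => by ring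
  have hcoeff := Matrix.eq_zero_of_forall_index_sum_mul_pow_eq_zero
    (X_injective.comp (Fin.castLE_injective h)) hroots
  intro r
  exact (isUnit_natCast_add_one _ r).mul_left_eq_zero.1 (congrFun hcoeff r)

namespace AddMonoidAlgebra

variable {k G : Type*} [CommRing k] [AddCommMonoid G]

def weightLinearMap (χ : G →+ k) : k[G] →ₗ[k] k[G] :=
  (AddMonoidAlgebra.basis G k).constr k fun g => χ g • single g 1

theorem weightLinearMap_single (χ : G →+ k) (g : G) (c : k) :
    weightLinearMap χ (single g c) = single g (χ g * c) := by
  have hsingle : single g c = c • AddMonoidAlgebra.basis G k g := by simp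
  rw [hsingle, map_smul, weightLinearMap, Module.Basis.constr_basis, smul_single, smul_single,
    smul_eq_mul, smul_eq_mul, mul_one, mul_comm]

theorem weightLinearMap_mul (χ : G →+ k) (a b : k[G]) :
    weightLinearMap χ (a * b) = a * weightLinearMap χ b + b * weightLinearMap χ a := by
  induction a using AddMonoidAlgebra.induction_linear with
  | zero => simp
  | add a a' ha ha' => rw [add_mul, map_add, ha, ha', map_add]; ring
  | single g c =>
    induction b using AddMonoidAlgebra.induction_linear with
    | zero => simp
    | add b b' hb hb' => rw [mul_add, map_add, hb, hb', map_add]; ring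
    | single g' c' =>
      rw [single_mul_single, weightLinearMap_single, weightLinearMap_single, weightLinearMap_single,
        single_mul_single, single_mul_single, add_comm g' g, ← single_add, map_add]
      congr 1
      ring

def weightDerivation (χ : G →+ k) : Derivation k k[G] k[G] :=
  Derivation.mk' (weightLinearMap χ) (weightLinearMap_mul χ)

@[simp]
theorem weightDerivation_single (χ : G →+ k) (g : G) (c : k) :
    weightDerivation χ (single g c) = single g (χ g * c) :=
  weightLinearMap_single χ g c

end AddMonoidAlgebra

theorem lX_mul {k : ℕ} (i : Fin k) (a b : ℤ) : lX i a * lX i b = lX i (a + b) := by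
  rw [lX, lX, lX, AddMonoidAlgebra.single_mul_single, Finsupp.single_add, one_mul]

theorem lX_one_pow {k : ℕ} (i : Fin k) (n : ℕ) : lX i 1 ^ n = lX i n := by
  rw [lX, lX, AddMonoidAlgebra.single_pow, one_pow, Finsupp.smul_single, nsmul_one]

theorem lX_one_injective {k : ℕ} : Function.Injective fun i : Fin k => lX i 1 := fun _ _ h =>
  Finsupp.single_left_injective one_ne_zero
    (AddMonoidAlgebra.single_left_injective one_ne_zero h)

def laurentPsum (k : ℕ) (n : ℤ) : Laur k := ∑ i : Fin k, (lX i n + lX i (-n))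

def eulerDerivation {k : ℕ} (i : Fin k) : Derivation ℚ (Laur k) (Laur k) :=
  AddMonoidAlgebra.weightDerivation ((Int.castAddHom ℚ).comp (Finsupp.applyAddHom i))

theorem eulerDerivation_lX {k : ℕ} (i j : Fin k) (z : ℤ) :
    eulerDerivation i (lX j z) = if j = i then (z : Laur k) * lX j z else 0 := by
  rw [eulerDerivation, lX, AddMonoidAlgebra.weightDerivation_single]
  split_ifs with hji
  · simp [hji, AddMonoidAlgebra.intCast_def, AddMonoidAlgebra.single_mul_single]
  · simp [hji]

theorem eulerDerivation_laurentPsum {k : ℕ} (i : Fin k) (n : ℤ) :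
    eulerDerivation i (laurentPsum k n) = n * (lX i n - lX i (-n)) := by
  simp only [laurentPsum, map_sum, map_add, eulerDerivation_lX, Finset.sum_add_distrib,
    Finset.sum_ite_eq', Finset.mem_univ, if_true, Int.cast_neg]
  ring

theorem algebraicIndependent_laurentPsum {n k : ℕ} (h : 2 * n + 1 ≤ k) :
    AlgebraicIndependent ℚ fun r : Fin n => laurentPsum k ((r : ℤ) + 1) := by
  refine algebraicIndependent_of_linearIndependent_derivations (algebraMap ℚ (Laur k)).injective _
    eulerDerivation (Fintype.linearIndependent_iff.2 fun c hc => ?_)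
  set a : Fin n → Laur k := fun r => c r * (((r : ℕ) : Laur k) + 1)
  -- `Q(x_i)` is `x_i ^ n` times the `i`-th equation; `Q` has degree `≤ 2n < k`
  set Q : Polynomial (Laur k) :=
    ∑ r, Polynomial.C (a r) * (Polynomial.X ^ (n + r + 1) - Polynomial.X ^ (n - r - 1))
  have hQ : Q = 0 := by
    refine Polynomial.eq_zero_of_natDegree_lt_card_of_eval_eq_zero Q lX_one_injective
      (fun i => ?_) ?_
    · have hi := congrFun hc i
      simp only [Finset.sum_apply, Pi.smul_apply, eulerDerivation_laurentPsum, smul_eq_mul,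
        Pi.zero_apply] at hi
      calc Q.eval (lX i 1)
          = lX i n * ∑ r : Fin n, c r * ((((r : ℕ) : ℤ) + 1 : ℤ) *
              (lX i (((r : ℕ) : ℤ) + 1) - lX i (-(((r : ℕ) : ℤ) + 1)))) := by
            simp only [Q, a, Polynomial.eval_finsetSum, Polynomial.eval_mul, Polynomial.eval_C,
              Polynomial.eval_sub, Polynomial.eval_pow, Polynomial.eval_X, lX_one_pow,
              Finset.mul_sum]
            refine Finset.sum_congr rfl fun r _ => ?_
            have hlow : ((n - r - 1 : ℕ) : ℤ) = n + -(((r : ℕ) : ℤ) + 1) := by omega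
            rw [hlow, ← lX_mul, Nat.cast_add, Nat.cast_add, Nat.cast_one, add_assoc, ← lX_mul]
            push_cast
            ring
        _ = 0 := by rw [hi, mul_zero]
    · calc Q.natDegree ≤ 2 * n := by
            refine Polynomial.natDegree_sum_le_of_forall_le _ _ fun r _ => ?_
            refine (Polynomial.natDegree_C_mul_le _ _).trans
              ((Polynomial.natDegree_sub_le _ _).trans ?_)
            simp only [Polynomial.natDegree_X_pow]
            omega
        _ < Fintype.card (Fin k) := by rw [Fintype.card_fin]; omega
  intro r
  have hcoeff := congrArg (Polynomial.coeff · (n + r + 1)) hQ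
  have hdistinct : ∀ s : Fin n, (n + r + 1 = n - s - 1) = False := fun s => by
    simp only [eq_iff_iff, iff_false]; omega
  simp only [Q, Polynomial.finsetSum_coeff, Polynomial.coeff_C_mul, Polynomial.coeff_sub,
    Polynomial.coeff_X_pow, add_left_inj, add_right_inj, Fin.val_inj, hdistinct, if_false, sub_zero,
    mul_ite, mul_one, mul_zero, Finset.sum_ite_eq, Finset.mem_univ, if_true, Polynomial.coeff_zero]
    at hcoeff
  exact (isUnit_natCast_add_one _ r).mul_left_eq_zero.1 hcoeff

theorem piI_eq_aeval (k m : ℕ) :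
    piI k m = aeval (Sum.elim (fun r : ℕ => C (laurentPsum k ((r : ℤ) + 1)))
      fun r => psum (Fin m) (Laur k) (r + 1)) := by
  rw [piI]
  congr
  funext s
  cases s <;> rfl

theorem algebraicIndependent_piI_generators {n k m : ℕ} (hk : 2 * n + 1 ≤ k) (hm : n ≤ m) :
    AlgebraicIndependent ℚ (Sum.elim (fun r : Fin n => C (laurentPsum k ((r : ℤ) + 1)))
      fun r : Fin n => psum (Fin m) (Laur k) (r + 1)) := by
  have h := ((algebraicIndependent_laurentPsum hk).sumElim_comp
    (algebraicIndependent_psum (R := Laur k) hm)).comp Sum.swap (Equiv.sumComm _ _).injective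
  rwa [Sum.elim_swap] at h

theorem eq_zero_of_piI_eq_zero {n k m : ℕ} (hk : 2 * n + 1 ≤ k) (hm : n ≤ m) {f : SymF2}
    (hf : ∀ s ∈ f.vars, Sum.elim id id s < n) (h : piI k m f = 0) : f = 0 := by
  obtain ⟨q, rfl⟩ := exists_rename_eq_of_vars_subset_range f (Sum.map Fin.val Fin.val)
    (Sum.map_injective.2 ⟨Fin.val_injective, Fin.val_injective⟩) (by
      rintro (a | a) ha
      exacts [⟨.inl ⟨a, hf _ ha⟩, rfl⟩, ⟨.inr ⟨a, hf _ ha⟩, rfl⟩])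
  rw [piI_eq_aeval, aeval_rename, Sum.elim_comp_map] at h
  rw [(algebraicIndependent_piI_generators hk hm).eq_zero_of_aeval_eq_zero q h, map_zero]

/-- If `π^{(k,m)}(f) = 0` for all large `k` and `m`, then `f = 0`. -/
theorem piI_eventually_zero_imp_zero (f : SymF2)
    (h : ∃ N : ℕ, ∀ k : ℕ, N ≤ k → ∀ m : ℕ, N ≤ m → piI k m f = 0) : f = 0 := by
  obtain ⟨N, hN⟩ := h
  set n := f.vars.sup (Sum.elim id id) + 1
  have hvars : ∀ s ∈ f.vars, Sum.elim id id s < n := fun s hs =>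
    Nat.lt_succ_of_le (Finset.le_sup (f := Sum.elim id id) hs)
  exact eq_zero_of_piI_eq_zero (le_max_right N (2 * n + 1)) (le_max_right N n) hvars
    (hN _ (le_max_left _ _) _ (le_max_left _ _))

end
end

section
/- Let Δ : Λ → Λ ⊗_ℚ Λ be the ℚ-algebra homomorphism determined by Δ(p_r) = p_r⊗1 + 1⊗p_r for all r ≥ 1. Then for every partition λ one has Δ(s^C_λ) = Σ_{μ ⊆ λ} s^C_μ ⊗ s_{λ/μ}, where the sum is over all partitions μ contained in λ. (Equivalently: the symplectic Schur function in the union of two sets of variables satisfies s^C_λ(X ∪ Y) = Σ_{μ⊆λ} s^C_μ(X) s_{λ/μ}(Y).) -/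
open MvPolynomial

noncomputable section

/-- A partition, as a weakly decreasing function `ℕ → ℕ` (0-indexed parts)
that eventually vanishes. -/
structure Partn where
  part : ℕ → ℕ
  antitone' : ∀ i, part (i + 1) ≤ part i
  exists_zero : ∃ N, part N = 0

/-- The length (number of nonzero parts) of a partition. -/
def Partn.len (l : Partn) : ℕ := Nat.find l.exists_zero

/-- Containment of partitions (of their Young diagrams). -/
def Partn.Sub (mu lam : Partn) : Prop := ∀ i, mu.part i ≤ lam.part i

/-- The empty partition. -/
def Partn.empty : Partn := ⟨fun _ => 0, fun _ => le_rfl, ⟨0, rfl⟩⟩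

/-- A strict partition: strictly decreasing positive parts. -/
structure SPartn where
  part : ℕ → ℕ
  strict' : ∀ i, part (i + 1) ≠ 0 → part (i + 1) < part i
  exists_zero : ∃ N, part N = 0

/-- The length (number of nonzero parts) of a strict partition. -/
def SPartn.len (l : SPartn) : ℕ := Nat.find l.exists_zero

/-- Containment of strict partitions. -/
def SPartn.Sub (mu lam : SPartn) : Prop := ∀ i, mu.part i ≤ lam.part i

/-- The empty strict partition. -/
def SPartn.empty : SPartn := ⟨fun _ => 0, fun _ h => absurd rfl h, ⟨0, rfl⟩⟩

/-- The one-row strict partition `(a)`. -/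
def SPartn.single (a : ℕ) : SPartn :=
  ⟨fun i => if i = 0 then a else 0,
   fun i h => absurd (if_neg (Nat.succ_ne_zero i)) h, ⟨1, rfl⟩⟩

/-- The two-row strict partition `(a, b)` with `b < a` (allowing `b = 0`). -/
def SPartn.two (a b : ℕ) (h : b < a) : SPartn :=
  ⟨fun i => if i = 0 then a else if i = 1 then b else 0,
   by
    intro i hi
    match i with
    | 0 => simpa using h
    | (n+1) => simp at hi,
   ⟨2, rfl⟩⟩

/-- Parts of a strict partition are strictly decreasing within its length. -/
theorem SPartn.part_lt (s : SPartn) {i j : ℕ} (hij : i < j) (hj : j < s.len) :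
    s.part j < s.part i := by
  have hjne : s.part j ≠ 0 := Nat.find_min s.exists_zero hj
  have key : ∀ d i, s.part (i + d + 1) ≠ 0 → s.part (i + d + 1) < s.part i := by
    intro d
    induction d with
    | zero => intro i hI; simpa using s.strict' i (by simpa using hI)
    | succ d ih =>
      intro i hI
      have h1 : s.part (i + d + 1 + 1) < s.part (i + d + 1) := s.strict' (i + d + 1) hI
      have h2 : s.part (i + d + 1) ≠ 0 := by omega
      exact lt_trans h1 (ih i h2)
  have hj' : i + (j - i - 1) + 1 = j := by omega
  rw [← hj'] at hjne ⊢
  exact key _ i hjne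


/-- `h_r ∈ Λ`, determined by `h_0 = 1` and the Newton recursion
`r·h_r = Σ_{i=1}^r p_i·h_{r−i}` (here `X i` is `p_{i+1}`). -/
def hSym : ℕ → SymF
  | 0 => 1
  | (r + 1) =>
      (((r : ℚ) + 1))⁻¹ • (∑ i ∈ Finset.range (r + 1), MvPolynomial.X i * hSym (r - i))
  decreasing_by exact Nat.lt_succ_of_le (Nat.sub_le r i)

/-- `h_r` for `r ∈ ℤ`, with `h_r = 0` for `r < 0`. -/
def hZ (z : ℤ) : SymF := if 0 ≤ z then hSym z.toNat else 0

/-- The skew Schur function `s_{λ/μ} = det[h_{λ_i−μ_j−i+j}]`. -/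
def skewSchur (lam mu : Partn) : SymF :=
  Matrix.det (Matrix.of fun i j : Fin (max lam.len mu.len) =>
    hZ ((lam.part i : ℤ) - (mu.part j : ℤ) - (i : ℤ) + (j : ℤ)))

/-- The symplectic Schur function
`s^C_λ = (1/2)·det[h_{λ_i−i+j} + h_{λ_i−i−j+2}]_{i,j=1}^{ℓ(λ)}`, `s^C_∅ = 1`. -/
def sC (lam : Partn) : SymF :=
  if lam.len = 0 then 1
  else (2 : ℚ)⁻¹ • Matrix.det (Matrix.of fun i j : Fin lam.len =>
    hZ ((lam.part i : ℤ) - (i : ℤ) + (j : ℤ)) + hZ ((lam.part i : ℤ) - (i : ℤ) - (j : ℤ)))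

/-- The coproduct `Δ : Λ → Λ ⊗ Λ`, `p_r ↦ p_r ⊗ 1 + 1 ⊗ p_r`. -/
def Delta : SymF →ₐ[ℚ] SymF2 :=
  MvPolynomial.aeval fun r => MvPolynomial.X (Sum.inl r) + MvPolynomial.X (Sum.inr r)

section AuxBasics
open Finset

theorem Partn.anti (l : Partn) : Antitone l.part :=
  antitone_nat_of_succ_le l.antitone'

theorem Partn.part_len (l : Partn) : l.part l.len = 0 :=
  Nat.find_spec l.exists_zero

theorem Partn.part_eq_zero (l : Partn) {k : ℕ} (h : l.len ≤ k) : l.part k = 0 :=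
  Nat.le_zero.mp ((l.anti h).trans_eq l.part_len)

theorem Partn.len_le {l : Partn} {k : ℕ} (h : l.part k = 0) : l.len ≤ k :=
  Nat.find_le h

theorem Partn.ext' {a b : Partn} (h : a.part = b.part) : a = b := by
  cases a; cases b; cases h; rfl

theorem Partn.Sub.len_le {mu lam : Partn} (h : mu.Sub lam) : mu.len ≤ lam.len :=
  Partn.len_le (Nat.le_zero.mp ((h lam.len).trans_eq lam.part_len))

theorem hZ_neg {z : ℤ} (h : z < 0) : hZ z = 0 := if_neg (not_le.mpr h)

theorem hZ_ofNat (n : ℕ) : hZ (n : ℤ) = hSym n := by simp [hZ]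

theorem hSym_zero : hSym 0 = 1 := by rw [hSym]

theorem hZ_zero : hZ 0 = 1 := by rw [show (0:ℤ) = ((0:ℕ):ℤ) by norm_num, hZ_ofNat, hSym_zero]

theorem newton (k : ℕ) :
    (k : ℚ) • hSym k = ∑ i ∈ range k, MvPolynomial.X i * hSym (k - 1 - i) := by
  cases k with
  | zero => simp [hSym_zero]
  | succ r =>
    rw [hSym, smul_smul]
    push_cast
    rw [mul_inv_cancel₀ (by positivity : ((r:ℚ)+1) ≠ 0), one_smul]

theorem conv_aux (f g P : ℕ → SymF2)
    (hf : ∀ k : ℕ, (k:ℚ) • f k = ∑ i ∈ range k, P i * f (k-1-i)) (n : ℕ) :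
    ∑ k ∈ range (n+1), ((k:ℚ) • f k) * g (n-k)
      = ∑ i ∈ range n, P i * ∑ j ∈ range (n-i), f j * g (n-1-i-j) := by
  have lhs : ∑ k ∈ range (n+1), ((k:ℚ) • f k) * g (n-k)
      = ∑ k ∈ range (n+1), ∑ i ∈ range k, (P i * f (k-1-i)) * g (n-k) := by
    refine Finset.sum_congr rfl fun k _ => ?_
    rw [hf k, Finset.sum_mul]
  rw [lhs]
  have rhs : ∑ i ∈ range n, P i * ∑ j ∈ range (n-i), f j * g (n-1-i-j)
      = ∑ i ∈ range n, ∑ j ∈ range (n-i), (P i * f j) * g (n-1-i-j) := by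
    refine Finset.sum_congr rfl fun i _ => ?_
    rw [Finset.mul_sum]
    refine Finset.sum_congr rfl fun j _ => by ring
  rw [rhs]
  rw [Finset.sum_sigma', Finset.sum_sigma']
  refine Finset.sum_nbij' (fun x => ⟨x.2, x.1 - 1 - x.2⟩) (fun x => ⟨x.1 + x.2 + 1, x.1⟩)
    ?_ ?_ ?_ ?_ ?_
  · rintro ⟨k, i⟩ h
    simp only [Finset.mem_sigma, Finset.mem_range] at h ⊢
    omega
  · rintro ⟨i, j⟩ h
    simp only [Finset.mem_sigma, Finset.mem_range] at h ⊢
    omega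
  · rintro ⟨k, i⟩ h
    simp only [Finset.mem_sigma, Finset.mem_range] at h
    show (⟨i + (k - 1 - i) + 1, i⟩ : (_ : ℕ) × ℕ) = ⟨k, i⟩
    have hk : i + (k - 1 - i) + 1 = k := by omega
    rw [hk]
  · rintro ⟨i, j⟩ h
    simp only [Finset.mem_sigma, Finset.mem_range] at h
    show (⟨i, i + j + 1 - 1 - i⟩ : (_ : ℕ) × ℕ) = ⟨i, j⟩
    have hj : i + j + 1 - 1 - i = j := by omega
    rw [hj]
  · rintro ⟨k, i⟩ h
    simp only [Finset.mem_sigma, Finset.mem_range] at h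
    have h1 : n - 1 - i - (k - 1 - i) = n - k := by omega
    rw [h1, mul_assoc]

end AuxBasics
section Coproduct
open Finset MvPolynomial

noncomputable def rnL : SymF →ₐ[ℚ] SymF2 := MvPolynomial.rename Sum.inl
noncomputable def rnR : SymF →ₐ[ℚ] SymF2 := MvPolynomial.rename Sum.inr

theorem Delta_X (i : ℕ) :
    Delta (MvPolynomial.X i) = rnL (MvPolynomial.X i) + rnR (MvPolynomial.X i) := by
  simp [Delta, rnL, rnR]

theorem newton_L (k : ℕ) :
    (k : ℚ) • rnL (hSym k) = ∑ i ∈ range k, rnL (MvPolynomial.X i) * rnL (hSym (k-1-i)) := by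
  rw [← map_smul, newton, map_sum]
  exact Finset.sum_congr rfl fun i _ => map_mul _ _ _

theorem newton_R (k : ℕ) :
    (k : ℚ) • rnR (hSym k) = ∑ i ∈ range k, rnR (MvPolynomial.X i) * rnR (hSym (k-1-i)) := by
  rw [← map_smul, newton, map_sum]
  exact Finset.sum_congr rfl fun i _ => map_mul _ _ _

theorem reflect_inner (m : ℕ) :
    ∑ j ∈ range (m+1), rnR (hSym j) * rnL (hSym (m-j))
      = ∑ j ∈ range (m+1), rnL (hSym j) * rnR (hSym (m-j)) := by
  rw [← Finset.sum_range_reflect]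
  refine Finset.sum_congr rfl fun j hj => ?_
  simp only [Finset.mem_range] at hj
  rw [show m + 1 - 1 - j = m - j by omega, show m - (m - j) = j by omega, mul_comm]

theorem Delta_hSym (n : ℕ) :
    Delta (hSym n) = ∑ k ∈ range (n+1), rnL (hSym k) * rnR (hSym (n-k)) := by
  induction n using Nat.strong_induction_on with
  | _ n ih =>
  match n, ih with
  | 0, _ => simp [hSym_zero]
  | (m+1), ih =>
    set n := m + 1 with hn
    have hn0 : (n : ℚ) ≠ 0 := by positivity
    have cancel : ∀ x y : SymF2, (n:ℚ) • x = (n:ℚ) • y → x = y := by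
      intro x y h
      have h2 := congrArg (fun z => (n:ℚ)⁻¹ • z) h
      simpa [smul_smul, inv_mul_cancel₀ hn0] using h2
    apply cancel
    have hL : (n:ℚ) • Delta (hSym n)
        = ∑ i ∈ range n, (rnL (MvPolynomial.X i) + rnR (MvPolynomial.X i)) *
            (∑ k ∈ range (n-i), rnL (hSym k) * rnR (hSym (n-1-i-k))) := by
      rw [← map_smul, newton, map_sum]
      refine Finset.sum_congr rfl fun i hi => ?_
      simp only [Finset.mem_range] at hi
      rw [map_mul, Delta_X, ih (n-1-i) (by omega)]
      congr 1
      rw [show n - 1 - i + 1 = n - i by omega]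
    rw [hL]
    have hsplit : (n:ℚ) • ∑ k ∈ range (n+1), rnL (hSym k) * rnR (hSym (n-k))
        = (∑ k ∈ range (n+1), ((k:ℚ) • rnL (hSym k)) * rnR (hSym (n-k)))
          + ∑ k ∈ range (n+1), (((n-k : ℕ):ℚ) • rnR (hSym (n-k))) * rnL (hSym k) := by
      rw [Finset.smul_sum, ← Finset.sum_add_distrib]
      refine Finset.sum_congr rfl fun k hk => ?_
      simp only [Finset.mem_range] at hk
      have hcast : (n:ℚ) = (k:ℚ) + ((n-k : ℕ):ℚ) := by
        rw [← Nat.cast_add]; congr 1; omega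
      rw [hcast, add_smul, smul_mul_assoc]
      congr 1
      rw [mul_comm, smul_mul_assoc]
    rw [hsplit]
    have hT1 : ∑ k ∈ range (n+1), ((k:ℚ) • rnL (hSym k)) * rnR (hSym (n-k))
        = ∑ i ∈ range n, rnL (MvPolynomial.X i) *
            ∑ j ∈ range (n-i), rnL (hSym j) * rnR (hSym (n-1-i-j)) :=
      conv_aux (fun k => rnL (hSym k)) (fun t => rnR (hSym t)) (fun i => rnL (MvPolynomial.X i)) newton_L n
    have hT2 : ∑ k ∈ range (n+1), (((n-k : ℕ):ℚ) • rnR (hSym (n-k))) * rnL (hSym k)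
        = ∑ i ∈ range n, rnR (MvPolynomial.X i) *
            ∑ j ∈ range (n-i), rnL (hSym j) * rnR (hSym (n-1-i-j)) := by
      have refl1 : ∑ k ∈ range (n+1), (((n-k : ℕ):ℚ) • rnR (hSym (n-k))) * rnL (hSym k)
          = ∑ k ∈ range (n+1), ((k:ℚ) • rnR (hSym k)) * rnL (hSym (n-k)) := by
        rw [← Finset.sum_range_reflect]
        refine Finset.sum_congr rfl fun k hk => ?_
        simp only [Finset.mem_range] at hk
        rw [show n + 1 - 1 - k = n - k by omega, show n - (n - k) = k by omega]
      rw [refl1, conv_aux (fun k => rnR (hSym k)) (fun t => rnL (hSym t)) (fun i => rnR (MvPolynomial.X i)) newton_R n]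
      refine Finset.sum_congr rfl fun i hi => ?_
      simp only [Finset.mem_range] at hi
      congr 1
      have : n - 1 - i + 1 = n - i := by omega
      rw [← this, reflect_inner (n-1-i)]
    rw [hT1, hT2, ← Finset.sum_add_distrib]
    refine Finset.sum_congr rfl fun i _ => ?_
    rw [add_mul]
end Coproduct
section Window
open Finset MvPolynomial

theorem hZ_nonneg {z : ℤ} (h : 0 ≤ z) : hZ z = hSym z.toNat := if_pos h

theorem Delta_hZ (m c : ℤ) (W : Finset ℤ) (hW : ∀ a : ℤ, 0 ≤ a + c → a ≤ m → a ∈ W) :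
    Delta (hZ (m + c)) = ∑ a ∈ W, rnL (hZ (a + c)) * rnR (hZ (m - a)) := by
  by_cases hmc : 0 ≤ m + c
  · have hsub : Finset.Icc (-c) m ⊆ W := by
      intro a ha
      rw [Finset.mem_Icc] at ha
      exact hW a (by omega) ha.2
    have hv : ∀ a ∈ W, a ∉ Finset.Icc (-c) m →
        rnL (hZ (a + c)) * rnR (hZ (m - a)) = 0 := by
      intro a _ ha
      rw [Finset.mem_Icc] at ha
      rcases not_and_or.mp ha with h1 | h2
      · rw [hZ_neg (by omega : a + c < 0)]
        simp
      · rw [hZ_neg (by omega : m - a < 0)]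
        simp
    rw [← Finset.sum_subset hsub hv]
    set K := (m + c).toNat with hK
    rw [hZ_nonneg hmc, Delta_hSym]
    symm
    refine Finset.sum_nbij' (fun a => (a + c).toNat) (fun k => (k : ℤ) - c) ?_ ?_ ?_ ?_ ?_
    · intro a ha
      simp only [Finset.mem_Icc] at ha
      simp only [Finset.mem_range]
      omega
    · intro k hk
      simp only [Finset.mem_range] at hk
      simp only [Finset.mem_Icc]
      omega
    · intro a ha
      simp only [Finset.mem_Icc] at ha
      show ((a + c).toNat : ℤ) - c = a
      omega
    · intro k hk
      simp only [Finset.mem_range] at hk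
      show ((k : ℤ) - c + c).toNat = k
      omega
    · intro a ha
      simp only [Finset.mem_Icc] at ha
      show rnL (hZ (a + c)) * rnR (hZ (m - a))
          = rnL (hSym ((a + c).toNat)) * rnR (hSym ((m + c).toNat - (a + c).toNat))
      rw [hZ_nonneg (show (0:ℤ) ≤ a + c by omega), hZ_nonneg (show (0:ℤ) ≤ m - a by omega)]
      have h3 : (m - a).toNat = (m + c).toNat - (a + c).toNat := by omega
      rw [h3]
  · rw [hZ_neg (by omega), map_zero]
    symm
    refine Finset.sum_eq_zero fun a ha => ?_
    by_cases h1 : 0 ≤ a + c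
    · rw [hZ_neg (by omega : m - a < 0)]
      simp
    · rw [hZ_neg (by omega : a + c < 0)]
      simp

end Window
section CauchyBinet
open Finset Equiv Matrix

noncomputable def enumT (n : ℕ) (T : Finset ℤ) : Fin n → ℤ :=
  if h : T.card = n then ⇑(T.orderEmbOfFin h) else fun _ => 0

theorem enumT_strictMono {n : ℕ} {T : Finset ℤ} (h : T.card = n) :
    StrictMono (enumT n T) := by
  rw [enumT, dif_pos h]
  exact (T.orderEmbOfFin h).strictMono

theorem enumT_mem {n : ℕ} {T : Finset ℤ} (h : T.card = n) (k : Fin n) :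
    enumT n T k ∈ T := by
  rw [enumT, dif_pos h]
  exact Finset.orderEmbOfFin_mem T h k

theorem enumT_of_strictMono {n : ℕ} {g : Fin n → ℤ} (hg : StrictMono g) :
    enumT n (Finset.image g Finset.univ) = g := by
  have hcard : (Finset.image g Finset.univ).card = n := by
    rw [Finset.card_image_of_injective _ hg.injective, Finset.card_univ, Fintype.card_fin]
  rw [enumT, dif_pos hcard]
  exact (Finset.orderEmbOfFin_unique hcard
    (fun x => Finset.mem_image_of_mem g (Finset.mem_univ x)) hg).symm

theorem image_enumT {n : ℕ} {T : Finset ℤ} (h : T.card = n) :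
    Finset.image (enumT n T) Finset.univ = T := by
  apply Finset.eq_of_subset_of_card_le
  · intro x hx
    rw [Finset.mem_image] at hx
    obtain ⟨k, _, rfl⟩ := hx
    exact enumT_mem h k
  · rw [Finset.card_image_of_injective _ (enumT_strictMono h).injective,
      Finset.card_univ, Fintype.card_fin, h]

noncomputable def permOf {n : ℕ} (T : Finset ℤ) (hT : T.card = n) (p : Fin n → ℤ)
    (hinj : Function.Injective p) (hmem : ∀ k, p k ∈ T) : Equiv.Perm (Fin n) :=
  (Equiv.ofBijective (fun k => (⟨p k, hmem k⟩ : {x // x ∈ T}))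
      ((Fintype.bijective_iff_injective_and_card _).mpr
        ⟨fun a b hab => hinj (congrArg Subtype.val hab),
         by rw [Fintype.card_coe, hT, Fintype.card_fin]⟩)).trans
    (T.orderIsoOfFin hT).toEquiv.symm

theorem enumT_permOf {n : ℕ} (T : Finset ℤ) (hT : T.card = n) (p : Fin n → ℤ)
    (hinj : Function.Injective p) (hmem : ∀ k, p k ∈ T) (k : Fin n) :
    enumT n T (permOf T hT p hinj hmem k) = p k := by
  rw [enumT, dif_pos hT]
  have h1 : (T.orderEmbOfFin hT) (permOf T hT p hinj hmem k)
      = ((T.orderIsoOfFin hT) (permOf T hT p hinj hmem k) : ℤ) :=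
    (Finset.coe_orderIsoOfFin_apply T hT _).symm
  rw [h1, permOf]
  simp

theorem cauchy_binet {n : ℕ} (S : Finset ℤ) (B : Fin n → ℤ → SymF2) (A : ℤ → Fin n → SymF2) :
    (Matrix.of fun i j : Fin n => ∑ a ∈ S, B i a * A a j).det
      = ∑ T ∈ S.powersetCard n,
          (Matrix.of fun i k : Fin n => B i (enumT n T k)).det *
            (Matrix.of fun k j : Fin n => A (enumT n T k) j).det := by
  classical
  have step1 : (Matrix.of fun i j : Fin n => ∑ a ∈ S, B i a * A a j).det
      = ∑ p ∈ Fintype.piFinset (fun _ : Fin n => S),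
          (Matrix.of fun x i : Fin n => B x (p i)).det * ∏ i, A (p i) i := by
    rw [Matrix.det_apply']
    calc (∑ σ : Equiv.Perm (Fin n), ((Equiv.Perm.sign σ : ℤ) : SymF2) *
            ∏ i, (Matrix.of fun i j : Fin n => ∑ a ∈ S, B i a * A a j) (σ i) i)
        = ∑ σ : Equiv.Perm (Fin n), ∑ p ∈ Fintype.piFinset (fun _ : Fin n => S),
            ((Equiv.Perm.sign σ : ℤ) : SymF2) * ∏ i, (B (σ i) (p i) * A (p i) i) := by
          refine Finset.sum_congr rfl fun σ _ => ?_
          simp only [Matrix.of_apply]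
          rw [Finset.prod_univ_sum, Finset.mul_sum]
      _ = ∑ p ∈ Fintype.piFinset (fun _ : Fin n => S), ∑ σ : Equiv.Perm (Fin n),
            ((Equiv.Perm.sign σ : ℤ) : SymF2) * ∏ i, (B (σ i) (p i) * A (p i) i) :=
          Finset.sum_comm
      _ = ∑ p ∈ Fintype.piFinset (fun _ : Fin n => S),
            (Matrix.of fun x i : Fin n => B x (p i)).det * ∏ i, A (p i) i := by
          refine Finset.sum_congr rfl fun p _ => ?_
          rw [Matrix.det_apply', Finset.sum_mul]
          refine Finset.sum_congr rfl fun σ _ => ?_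
          rw [Finset.prod_mul_distrib]
          simp only [Matrix.of_apply]
          ring
  rw [step1]
  have step2 : ∑ p ∈ Fintype.piFinset (fun _ : Fin n => S),
          (Matrix.of fun x i : Fin n => B x (p i)).det * ∏ i, A (p i) i
      = ∑ p ∈ (Fintype.piFinset (fun _ : Fin n => S)).filter Function.Injective,
          (Matrix.of fun x i : Fin n => B x (p i)).det * ∏ i, A (p i) i := by
    symm
    apply Finset.sum_subset (Finset.filter_subset _ _)
    intro p hp hnp
    have hni : ¬ Function.Injective p := by
      intro hc
      exact hnp (Finset.mem_filter.mpr ⟨hp, hc⟩)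
    obtain ⟨a, b, hab, hne⟩ := Function.not_injective_iff.mp hni
    rw [Matrix.det_zero_of_column_eq hne (fun k => by simp [hab]), zero_mul]
  rw [step2]
  rw [← Finset.sum_fiberwise_of_maps_to (g := fun p => Finset.image p Finset.univ)
    (t := S.powersetCard n) ?hmaps]
  case hmaps =>
    intro p hp
    rw [Finset.mem_filter] at hp
    rw [Finset.mem_powersetCard]
    constructor
    · intro x hx
      rw [Finset.mem_image] at hx
      obtain ⟨k, _, rfl⟩ := hx
      exact (Fintype.mem_piFinset.mp hp.1) k
    · rw [Finset.card_image_of_injective _ hp.2, Finset.card_univ, Fintype.card_fin]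
  refine Finset.sum_congr rfl fun T hT => ?_
  rw [Finset.mem_powersetCard] at hT
  obtain ⟨hTS, hTn⟩ := hT
  have key : ∑ p ∈ ((Fintype.piFinset (fun _ : Fin n => S)).filter Function.Injective).filter
          (fun p => Finset.image p Finset.univ = T),
          (Matrix.of fun x i : Fin n => B x (p i)).det * ∏ i, A (p i) i
      = ∑ σ : Equiv.Perm (Fin n),
          (Matrix.of fun i k : Fin n => B i (enumT n T k)).det *
            (((Equiv.Perm.sign σ : ℤ) : SymF2) * ∏ i, A (enumT n T (σ i)) i) := by
    refine Finset.sum_bij'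
      (fun p hp => permOf T hTn p (Finset.mem_filter.mp (Finset.mem_filter.mp hp).1).2
        (fun k => (Finset.mem_filter.mp hp).2 ▸
          Finset.mem_image_of_mem p (Finset.mem_univ k)))
      (fun σ _ => fun k => enumT n T (σ k)) ?_ ?_ ?_ ?_ ?_
    · intro p hp
      exact Finset.mem_univ _
    · intro σ _
      rw [Finset.mem_filter, Finset.mem_filter]
      refine ⟨⟨Fintype.mem_piFinset.mpr fun k => hTS (enumT_mem hTn (σ k)), ?_⟩, ?_⟩
      · exact (enumT_strictMono hTn).injective.comp σ.injective
      · show Finset.image (fun k => enumT n T (σ k)) Finset.univ = T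
        rw [show (fun k => enumT n T (σ k)) = (enumT n T) ∘ ⇑σ from rfl,
          ← Finset.image_image, Finset.image_univ_of_surjective σ.surjective]
        exact image_enumT hTn
    · intro p hp
      funext k
      exact enumT_permOf T hTn p _ _ _
    · intro σ _
      apply Equiv.ext
      intro k
      apply (enumT_strictMono hTn).injective
      exact enumT_permOf T hTn _ _ _ k
    · intro p hp
      have hpk : ∀ k, p k = enumT n T
          (permOf T hTn p (Finset.mem_filter.mp (Finset.mem_filter.mp hp).1).2
            (fun k => (Finset.mem_filter.mp hp).2 ▸
              Finset.mem_image_of_mem p (Finset.mem_univ k)) k) :=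
        fun k => (enumT_permOf T hTn p _ _ k).symm
      have h1 : (Matrix.of fun x i : Fin n => B x (p i))
          = (Matrix.of fun x k : Fin n => B x (enumT n T k)).submatrix id
              (permOf T hTn p (Finset.mem_filter.mp (Finset.mem_filter.mp hp).1).2
                (fun k => (Finset.mem_filter.mp hp).2 ▸
                  Finset.mem_image_of_mem p (Finset.mem_univ k))) := by
        ext x i
        simp only [Matrix.submatrix_apply, Matrix.of_apply, id_eq]
        rw [← hpk]
      rw [h1, Matrix.det_permute']
      have h2 : ∏ i, A (p i) i = ∏ i, A (enumT n T
          (permOf T hTn p (Finset.mem_filter.mp (Finset.mem_filter.mp hp).1).2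
            (fun k => (Finset.mem_filter.mp hp).2 ▸
              Finset.mem_image_of_mem p (Finset.mem_univ k)) i)) i := by
        refine Finset.prod_congr rfl fun i _ => ?_
        rw [← hpk]
      rw [h2]
      ring
  rw [key, ← Finset.mul_sum]
  congr 1
  rw [Matrix.det_apply']
  refine Finset.sum_congr rfl fun σ _ => ?_
  simp only [Matrix.of_apply]
end CauchyBinet
section DetLemmas
open Finset Matrix

theorem det_cast {a b : ℕ} (h : a = b) (g : ℕ → ℕ → SymF) :
    (Matrix.of fun i j : Fin a => g i j).det = (Matrix.of fun i j : Fin b => g i j).det := by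
  subst h; rfl

/-- the `n × n` symplectic-type matrix attached to a partition -/
noncomputable def sympMat (mu : Partn) (n : ℕ) : Matrix (Fin n) (Fin n) SymF :=
  Matrix.of fun k j : Fin n =>
    hZ ((mu.part k : ℤ) - (k : ℤ) + (j : ℤ)) + hZ ((mu.part k : ℤ) - (k : ℤ) - (j : ℤ))

theorem det_sympMat (mu : Partn) : ∀ n : ℕ, mu.len ≤ n → 1 ≤ n →
    (sympMat mu n).det = (2 : ℚ) • sC mu := by
  have base : (sympMat mu (max mu.len 1)).det = (2 : ℚ) • sC mu := by
    by_cases h0 : mu.len = 0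
    · rw [h0]
      have h1 : max 0 1 = 1 := rfl
      rw [h1]
      rw [Matrix.det_fin_one]
      have hp : mu.part 0 = 0 := mu.part_eq_zero (le_of_eq h0)
      simp only [sympMat, Matrix.of_apply, sC, h0, if_pos, Fin.val_zero]
      rw [hp]
      norm_num [hZ_zero]
      rw [two_smul]
      exact (one_add_one_eq_two).symm
    · have h1 : max mu.len 1 = mu.len := Nat.max_eq_left (Nat.one_le_iff_ne_zero.mpr h0)
      rw [h1, sC, if_neg h0, smul_smul]
      norm_num
      rfl
  have step : ∀ n : ℕ, 1 ≤ n → mu.len ≤ n → (sympMat mu (n+1)).det = (sympMat mu n).det := by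
    intro n hn1 hlen
    rw [Matrix.det_succ_row _ (Fin.last n)]
    have hrow : ∀ j : Fin (n+1), (j : ℕ) ≠ n → sympMat mu (n+1) (Fin.last n) j = 0 := by
      intro j hj
      have hp : mu.part n = 0 := mu.part_eq_zero hlen
      have hj' : (j : ℕ) < n := by
        have := j.2
        omega
      simp only [sympMat, Matrix.of_apply, Fin.val_last, hp]
      rw [hZ_neg (by push_cast; omega), hZ_neg (by push_cast; omega), add_zero]
    rw [Finset.sum_eq_single (Fin.last n)]
    · have hp : mu.part n = 0 := mu.part_eq_zero hlen
      have hentry : sympMat mu (n+1) (Fin.last n) (Fin.last n) = 1 := by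
        simp only [sympMat, Matrix.of_apply, Fin.val_last]
        have e1 : (mu.part n : ℤ) - (n:ℤ) + (n:ℤ) = 0 := by rw [hp]; push_cast; ring
        have e2 : (mu.part n : ℤ) - (n:ℤ) - (n:ℤ) < 0 := by rw [hp]; push_cast; omega
        rw [e1, hZ_zero, hZ_neg e2, add_zero]
      rw [hentry, Fin.val_last, mul_one, Even.neg_one_pow (⟨n, rfl⟩ : Even (n + n)), one_mul]
      congr 1
      ext i j
      simp only [Matrix.submatrix_apply, sympMat, Matrix.of_apply, Fin.succAbove_last,
        Fin.coe_castSucc]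
    · intro j _ hj
      rw [hrow j (by simpa [Fin.ext_iff, Fin.val_last] using hj), mul_zero, zero_mul]
    · intro h
      exact absurd (Finset.mem_univ _) h
  intro n hlen h1
  induction n with
  | zero => omega
  | succ m ih =>
    by_cases hm : 1 ≤ m ∧ mu.len ≤ m
    · rw [step m hm.1 hm.2, ih hm.2 hm.1]
    · have : m + 1 = max mu.len 1 := by omega
      rw [this, base]

theorem det_vanish_block {n : ℕ} (M : Matrix (Fin n) (Fin n) SymF) (k0 : Fin n)
    (h : ∀ i j : Fin n, (k0 : ℕ) ≤ (i : ℕ) → (j : ℕ) ≤ (k0 : ℕ) → M i j = 0) :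
    M.det = 0 := by
  classical
  rw [Matrix.det_apply']
  refine Finset.sum_eq_zero fun σ _ => ?_
  have hex : ∃ j : Fin n, (j : ℕ) ≤ (k0 : ℕ) ∧ (k0 : ℕ) ≤ (σ j : ℕ) := by
    by_contra hc
    push_neg at hc
    have hmaps : ∀ j ∈ Finset.filter (fun j : Fin n => (j : ℕ) ≤ (k0 : ℕ)) Finset.univ,
        σ j ∈ Finset.filter (fun i : Fin n => (i : ℕ) < (k0 : ℕ)) Finset.univ := by
      intro j hj
      simp only [Finset.mem_filter, Finset.mem_univ, true_and] at hj ⊢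
      exact hc j hj
    have hcard := Finset.card_le_card_of_injOn σ hmaps (σ.injective.injOn)
    have hle : Finset.filter (fun j : Fin n => (j : ℕ) ≤ (k0 : ℕ)) Finset.univ
        = Finset.image (Fin.castLE (by omega : (k0:ℕ) + 1 ≤ n)) Finset.univ := by
      ext x
      simp only [Finset.mem_filter, Finset.mem_univ, true_and, Finset.mem_image]
      constructor
      · intro hx
        exact ⟨⟨(x : ℕ), by omega⟩, by simp [Fin.ext_iff]⟩
      · rintro ⟨a, rfl⟩
        simpa using Nat.lt_succ_iff.mp a.2
    have hlt : Finset.filter (fun i : Fin n => (i : ℕ) < (k0 : ℕ)) Finset.univ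
        = Finset.image (Fin.castLE (by omega : (k0:ℕ) ≤ n)) Finset.univ := by
      ext x
      simp only [Finset.mem_filter, Finset.mem_univ, true_and, Finset.mem_image]
      constructor
      · intro hx
        exact ⟨⟨(x : ℕ), hx⟩, by simp [Fin.ext_iff]⟩
      · rintro ⟨a, rfl⟩
        simpa using a.2
    rw [hle, hlt, Finset.card_image_of_injective _ (Fin.castLE_injective _),
      Finset.card_image_of_injective _ (Fin.castLE_injective _),
      Finset.card_univ, Finset.card_univ, Fintype.card_fin, Fintype.card_fin] at hcard
    omega
  obtain ⟨j, hj1, hj2⟩ := hex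
  exact mul_eq_zero_of_right _ (Finset.prod_eq_zero (Finset.mem_univ j) (h (σ j) j hj2 hj1))

end DetLemmas
section MuOf
open Finset

theorem strictMono_int_ge {n : ℕ} {f : Fin n → ℤ} (hf : StrictMono f) :
    ∀ (d : ℕ) (i j : Fin n), (i : ℕ) + d = (j : ℕ) → f i + (d : ℤ) ≤ f j := by
  intro d
  induction d with
  | zero =>
    intro i j hij
    have : i = j := Fin.ext (by omega)
    subst this
    simp
  | succ d ih =>
    intro i j hij
    have hj : (i : ℕ) + d < n := by omega
    have h1 : f i + (d : ℤ) ≤ f ⟨(i : ℕ) + d, hj⟩ := ih i _ rfl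
    have h2 : f ⟨(i : ℕ) + d, hj⟩ < f j := hf (by rw [Fin.lt_def]; simp; omega)
    push_cast
    omega

noncomputable def muOf (n : ℕ) (T : Finset ℤ) : Partn where
  part k := if h : k < n ∧ T.card = n then (enumT n T (Fin.rev ⟨k, h.1⟩) + (k : ℤ)).toNat else 0
  antitone' := by
    intro k
    beta_reduce
    by_cases h1 : k + 1 < n ∧ T.card = n
    · have h0 : k < n ∧ T.card = n := ⟨by omega, h1.2⟩
      rw [dif_pos h1, dif_pos h0]
      have hm : (Fin.rev (⟨k+1, h1.1⟩ : Fin n)) < Fin.rev (⟨k, h0.1⟩ : Fin n) := by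
        rw [Fin.lt_def]
        simp only [Fin.val_rev]
        omega
      have := enumT_strictMono h1.2 hm
      omega
    · rw [dif_neg h1]
      exact Nat.zero_le _
  exists_zero := ⟨n, by beta_reduce; rw [dif_neg]; omega⟩

theorem muOf_part_lt {n : ℕ} {T : Finset ℤ} (hTn : T.card = n) {k : ℕ} (hk : k < n) :
    (muOf n T).part k = (enumT n T (Fin.rev ⟨k, hk⟩) + (k : ℤ)).toNat :=
  dif_pos ⟨hk, hTn⟩

theorem muOf_part_zero {n : ℕ} {T : Finset ℤ} {k : ℕ} (hk : ¬(k < n ∧ T.card = n)) :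
    (muOf n T).part k = 0 := dif_neg hk

theorem muOf_len_le {n : ℕ} {T : Finset ℤ} : (muOf n T).len ≤ n :=
  Partn.len_le (muOf_part_zero (by omega))

theorem muOf_coe {n : ℕ} {T : Finset ℤ} (hTn : T.card = n)
    (hlo : ∀ x ∈ T, 1 - (n : ℤ) ≤ x) {k : ℕ} (hk : k < n) :
    ((muOf n T).part k : ℤ) = enumT n T (Fin.rev ⟨k, hk⟩) + (k : ℤ) := by
  rw [muOf_part_lt hTn hk]
  have hn0 : 0 < n := by omega
  have h0 : (1 : ℤ) - n ≤ enumT n T ⟨0, hn0⟩ := hlo _ (enumT_mem hTn _)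
  have h1 := strictMono_int_ge (enumT_strictMono hTn) (n - 1 - k) ⟨0, hn0⟩
      (Fin.rev ⟨k, hk⟩) (by simp only [Fin.val_rev]; omega)
  rw [Int.toNat_of_nonneg (by push_cast at h1 ⊢; omega)]

theorem muOf_eq_self (mu : Partn) (n : ℕ) (hlen : mu.len ≤ n) :
    muOf n (Finset.image (fun i : Fin n => (mu.part (Fin.rev i) : ℤ) - ((Fin.rev i : ℕ) : ℤ))
      Finset.univ) = mu := by
  set g : Fin n → ℤ := fun i => (mu.part (Fin.rev i) : ℤ) - ((Fin.rev i : ℕ) : ℤ) with hg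
  have hgmono : StrictMono g := by
    intro i j hij
    have hrev : (Fin.rev j : ℕ) < (Fin.rev i : ℕ) := by
      simp only [Fin.val_rev]
      have := hij
      rw [Fin.lt_def] at this
      have hi := i.2
      have hj := j.2
      omega
    have hmu : mu.part (Fin.rev i) ≤ mu.part (Fin.rev j) := mu.anti (le_of_lt hrev)
    simp only [hg]
    push_cast
    omega
  have hcard : (Finset.image g Finset.univ).card = n := by
    rw [Finset.card_image_of_injective _ hgmono.injective, Finset.card_univ, Fintype.card_fin]
  apply Partn.ext'
  funext k
  by_cases hk : k < n
  · rw [muOf_part_lt hcard hk, enumT_of_strictMono hgmono]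
    have hrr : Fin.rev (Fin.rev (⟨k, hk⟩ : Fin n)) = ⟨k, hk⟩ := Fin.rev_rev _
    simp only [hg, hrr]
    omega
  · rw [muOf_part_zero (by omega)]
    exact (mu.part_eq_zero (by omega)).symm

theorem muOf_inj {n : ℕ} {T T' : Finset ℤ} (hTn : T.card = n) (hTn' : T'.card = n)
    (hlo : ∀ x ∈ T, 1 - (n : ℤ) ≤ x) (hlo' : ∀ x ∈ T', 1 - (n : ℤ) ≤ x)
    (h : muOf n T = muOf n T') : T = T' := by
  have he : ∀ i : Fin n, enumT n T i = enumT n T' i := by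
    intro i
    have hk : (Fin.rev i : ℕ) < n := (Fin.rev i).2
    have h1 := muOf_coe hTn hlo hk
    have h2 := muOf_coe hTn' hlo' hk
    rw [h] at h1
    have hrr : Fin.rev (⟨(Fin.rev i : ℕ), hk⟩ : Fin n) = i := by
      rw [show (⟨(Fin.rev i : ℕ), hk⟩ : Fin n) = Fin.rev i from rfl]
      exact Fin.rev_rev i
    rw [hrr] at h1 h2
    omega
  rw [← image_enumT hTn, ← image_enumT hTn']
  congr 1
  exact funext he

end MuOf
section SkewMat
open Finset Matrix

noncomputable def skewMat (lam mu : Partn) (n : ℕ) : Matrix (Fin n) (Fin n) SymF :=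
  Matrix.of fun i j : Fin n =>
    hZ ((lam.part i : ℤ) - (mu.part j : ℤ) - (i : ℤ) + (j : ℤ))

theorem skewMat_det_of_sub {lam mu : Partn} (h : mu.Sub lam) :
    skewSchur lam mu = (skewMat lam mu lam.len).det := by
  rw [skewSchur, skewMat]
  exact det_cast (by rw [Nat.max_eq_left h.len_le])
    (fun i j => hZ ((lam.part i : ℤ) - (mu.part j : ℤ) - (i : ℤ) + (j : ℤ)))

theorem skewMat_det_of_not {lam mu : Partn} {n : ℕ} (h : ¬ mu.Sub lam) (hlen : mu.len ≤ n) :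
    (skewMat lam mu n).det = 0 := by
  rw [Partn.Sub] at h
  push_neg at h
  obtain ⟨k0, hk0⟩ := h
  have hk0len : k0 < mu.len := by
    by_contra hc
    rw [mu.part_eq_zero (by omega)] at hk0
    omega
  have hk0n : k0 < n := by omega
  apply det_vanish_block _ ⟨k0, hk0n⟩
  intro i j hi hj
  have h1 : lam.part i ≤ lam.part k0 := lam.anti hi
  have h2 : mu.part k0 ≤ mu.part j := mu.anti hj
  rw [skewMat, Matrix.of_apply, hZ_neg (by push_cast; omega)]

end SkewMat
section EntryLemma
open Finset Matrix

theorem entry_eq (lam : Partn) (i j : Fin lam.len) :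
    Delta (sympMat lam lam.len i j)
      = ∑ a ∈ Finset.Icc (1 - (lam.len : ℤ)) ((lam.part 0 : ℕ) : ℤ),
          (rnR (hZ ((lam.part i : ℤ) - (i : ℤ) - a))) *
          (rnL (hZ (a + (j : ℤ)) + hZ (a - (j : ℤ)))) := by
  have hji : (j : ℕ) < lam.len := j.2
  have hlam0 : lam.part i ≤ lam.part 0 := lam.anti (Nat.zero_le _)
  have h1 := Delta_hZ ((lam.part i : ℤ) - (i : ℤ)) ((j : ℤ))
      (Finset.Icc (1 - (lam.len : ℤ)) ((lam.part 0 : ℕ) : ℤ))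
      (by
        intro a ha1 ha2
        rw [Finset.mem_Icc]
        have hii : (i : ℕ) < lam.len := i.2
        constructor
        · push_cast at ha1 ⊢
          omega
        · have : ((lam.part i : ℕ) : ℤ) ≤ ((lam.part 0 : ℕ) : ℤ) := by exact_mod_cast hlam0
          omega)
  have h2 := Delta_hZ ((lam.part i : ℤ) - (i : ℤ)) (-(j : ℤ))
      (Finset.Icc (1 - (lam.len : ℤ)) ((lam.part 0 : ℕ) : ℤ))
      (by
        intro a ha1 ha2
        rw [Finset.mem_Icc]
        have hii : (i : ℕ) < lam.len := i.2
        constructor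
        · push_cast at ha1 ⊢
          omega
        · have : ((lam.part i : ℕ) : ℤ) ≤ ((lam.part 0 : ℕ) : ℤ) := by exact_mod_cast hlam0
          omega)
  rw [sympMat, Matrix.of_apply,
    show (lam.part i : ℤ) - (i : ℤ) - (j : ℤ) = (lam.part i : ℤ) - (i : ℤ) + (-(j : ℤ)) by ring,
    map_add, h1, h2, ← Finset.sum_add_distrib]
  refine Finset.sum_congr rfl fun a _ => ?_
  rw [show a - (j : ℤ) = a + (-(j : ℤ)) by ring, map_add]
  ring

end EntryLemma
section TermEval
open Finset Matrix

open Classical in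
noncomputable def Gfun (lam mu : Partn) : SymF2 :=
  if mu.Sub lam then
    MvPolynomial.rename Sum.inl (sC mu) * MvPolynomial.rename Sum.inr (skewSchur lam mu)
  else 0

theorem term_eval (lam : Partn) (hn : lam.len ≠ 0) (T : Finset ℤ)
    (hT : T ∈ (Finset.Icc (1 - (lam.len : ℤ)) ((lam.part 0 : ℕ) : ℤ)).powersetCard lam.len) :
    (Matrix.of fun i k : Fin lam.len =>
        rnR (hZ ((lam.part i : ℤ) - (i : ℤ) - enumT lam.len T k))).det *
      (Matrix.of fun k j : Fin lam.len =>
        rnL (hZ (enumT lam.len T k + (j : ℤ)) + hZ (enumT lam.len T k - (j : ℤ)))).det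
    = (2:ℚ) • Gfun lam (muOf lam.len T) := by
  rw [Finset.mem_powersetCard] at hT
  obtain ⟨hTS, hTn⟩ := hT
  have hn1 : 1 ≤ lam.len := Nat.one_le_iff_ne_zero.mpr hn
  have hlo : ∀ x ∈ T, 1 - (lam.len : ℤ) ≤ x := fun x hx => (Finset.mem_Icc.mp (hTS hx)).1
  set mu := muOf lam.len T with hmu
  have hmuval : ∀ k : Fin lam.len,
      (mu.part (k : ℕ) : ℤ) = enumT lam.len T (Fin.rev k) + (k : ℤ) :=
    fun k => muOf_coe hTn hlo k.2
  set NB : Matrix (Fin lam.len) (Fin lam.len) SymF :=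
    Matrix.of fun i k : Fin lam.len => hZ ((lam.part i : ℤ) - (i : ℤ) - enumT lam.len T k)
    with hNB
  set NA : Matrix (Fin lam.len) (Fin lam.len) SymF :=
    Matrix.of fun k j : Fin lam.len =>
      hZ (enumT lam.len T k + (j : ℤ)) + hZ (enumT lam.len T k - (j : ℤ)) with hNA
  have hB : (Matrix.of fun i k : Fin lam.len =>
      rnR (hZ ((lam.part i : ℤ) - (i : ℤ) - enumT lam.len T k))).det = rnR NB.det := by
    have h1 : (Matrix.of fun i k : Fin lam.len =>
        rnR (hZ ((lam.part i : ℤ) - (i : ℤ) - enumT lam.len T k)))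
        = rnR.toRingHom.mapMatrix NB := by
      ext i k
      simp [RingHom.mapMatrix_apply, Matrix.map_apply, hNB]
    rw [h1, ← RingHom.map_det]
    rfl
  have hA : (Matrix.of fun k j : Fin lam.len =>
      rnL (hZ (enumT lam.len T k + (j : ℤ)) + hZ (enumT lam.len T k - (j : ℤ)))).det
      = rnL NA.det := by
    have h1 : (Matrix.of fun k j : Fin lam.len =>
        rnL (hZ (enumT lam.len T k + (j : ℤ)) + hZ (enumT lam.len T k - (j : ℤ))))
        = rnL.toRingHom.mapMatrix NA := by
      ext k j
      simp [RingHom.mapMatrix_apply, Matrix.map_apply, hNA]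
    rw [h1, ← RingHom.map_det]
    rfl
  rw [hB, hA]
  have hrevB : skewMat lam mu lam.len = NB.submatrix id Fin.revPerm := by
    ext i k
    simp only [skewMat, Matrix.submatrix_apply, Matrix.of_apply, id_eq, hNB, Fin.revPerm_apply]
    have h := hmuval k
    have harg : (lam.part i : ℤ) - (mu.part k : ℤ) - (i : ℤ) + (k : ℤ)
        = (lam.part i : ℤ) - (i : ℤ) - enumT lam.len T (Fin.rev k) := by omega
    rw [harg]
  have hrevA : sympMat mu lam.len = NA.submatrix Fin.revPerm id := by
    ext k j
    simp only [sympMat, Matrix.submatrix_apply, Matrix.of_apply, id_eq, hNA, Fin.revPerm_apply]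
    have h := hmuval k
    have harg1 : (mu.part k : ℤ) - (k : ℤ) + (j : ℤ)
        = enumT lam.len T (Fin.rev k) + (j : ℤ) := by omega
    have harg2 : (mu.part k : ℤ) - (k : ℤ) - (j : ℤ)
        = enumT lam.len T (Fin.rev k) - (j : ℤ) := by omega
    rw [harg1, harg2]
  have hdetB : (skewMat lam mu lam.len).det
      = (((Equiv.Perm.sign (Fin.revPerm : Equiv.Perm (Fin lam.len))) : ℤ) : SymF) * NB.det := by
    rw [hrevB, Matrix.det_permute']
  have hdetA : (sympMat mu lam.len).det
      = (((Equiv.Perm.sign (Fin.revPerm : Equiv.Perm (Fin lam.len))) : ℤ) : SymF) * NA.det := by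
    rw [hrevA, Matrix.det_permute]
  have heps : (((Equiv.Perm.sign (Fin.revPerm : Equiv.Perm (Fin lam.len))) : ℤ) : SymF2) *
      (((Equiv.Perm.sign (Fin.revPerm : Equiv.Perm (Fin lam.len))) : ℤ) : SymF2) = 1 := by
    rw [← Int.cast_mul, ← Units.val_mul, ← sq, Int.units_sq, Units.val_one, Int.cast_one]
  have hprod : rnR ((skewMat lam mu lam.len).det) * rnL ((sympMat mu lam.len).det)
      = rnR NB.det * rnL NA.det := by
    rw [hdetB, hdetA, _root_.map_mul, _root_.map_mul, map_intCast, map_intCast,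
      show ((((Equiv.Perm.sign (Fin.revPerm : Equiv.Perm (Fin lam.len))) : ℤ) : SymF2) * rnR NB.det)
          * ((((Equiv.Perm.sign (Fin.revPerm : Equiv.Perm (Fin lam.len))) : ℤ) : SymF2) * rnL NA.det)
        = ((((Equiv.Perm.sign (Fin.revPerm : Equiv.Perm (Fin lam.len))) : ℤ) : SymF2) *
            (((Equiv.Perm.sign (Fin.revPerm : Equiv.Perm (Fin lam.len))) : ℤ) : SymF2))
          * (rnR NB.det * rnL NA.det) by ring, heps, one_mul]
  rw [← hprod, det_sympMat mu lam.len muOf_len_le hn1]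
  by_cases hsub : mu.Sub lam
  · rw [Gfun, if_pos hsub, ← skewMat_det_of_sub hsub, _root_.map_smul, mul_smul_comm]
    congr 1
    exact mul_comm _ _
  · rw [Gfun, if_neg hsub, skewMat_det_of_not hsub muOf_len_le, map_zero, zero_mul, smul_zero]

end TermEval
section MainAssembly
open Finset Matrix

theorem gRev_strictMono (mu : Partn) (n : ℕ) :
    StrictMono (fun i : Fin n => (mu.part (Fin.rev i) : ℤ) - ((Fin.rev i : ℕ) : ℤ)) := by
  intro i j hij
  have hrev : (Fin.rev j : ℕ) < (Fin.rev i : ℕ) := by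
    simp only [Fin.val_rev]
    rw [Fin.lt_def] at hij
    have hi := i.2
    have hj := j.2
    omega
  have hmu : mu.part (Fin.rev i) ≤ mu.part (Fin.rev j) := mu.anti (le_of_lt hrev)
  simp only []
  push_cast
  omega

theorem Delta_sC' (lam : Partn) :
    Delta (sC lam) =
      ∑ᶠ (mu : Partn) (_ : mu.Sub lam),
        MvPolynomial.rename Sum.inl (sC mu) *
          MvPolynomial.rename Sum.inr (skewSchur lam mu) := by
  classical
  have hfin : ∀ mu : Partn, (∑ᶠ (_ : mu.Sub lam),
      MvPolynomial.rename Sum.inl (sC mu) * MvPolynomial.rename Sum.inr (skewSchur lam mu))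
      = Gfun lam mu := by
    intro mu
    rw [finsum_eq_if, Gfun]
  rw [finsum_congr hfin]
  by_cases hn : lam.len = 0
  · have hempty_len : Partn.empty.len = 0 := Nat.eq_zero_of_le_zero (Partn.len_le rfl)
    have hlam_part : ∀ i, lam.part i = 0 := fun i => lam.part_eq_zero (by omega)
    rw [finsum_eq_single (Gfun lam) Partn.empty ?hzero]
    case hzero =>
      intro mu hmu
      rw [Gfun, if_neg]
      intro hc
      apply hmu
      apply Partn.ext'
      funext i
      have h2 := hc i
      rw [hlam_part i] at h2
      exact Nat.le_zero.mp h2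
    have h1 : sC Partn.empty = 1 := by rw [sC, if_pos hempty_len]
    have h2 : skewSchur lam Partn.empty = 1 := by
      rw [skewSchur,
        det_cast (show max lam.len Partn.empty.len = 0 by omega)
          (fun i j => hZ ((lam.part i : ℤ) - (Partn.empty.part j : ℤ) - (i : ℤ) + (j : ℤ)))]
      exact Matrix.det_fin_zero
    have hsubE : Partn.empty.Sub lam := fun i => Nat.zero_le _
    rw [Gfun, if_pos hsubE, h1, h2, _root_.map_one, _root_.map_one, mul_one, sC, if_pos hn, _root_.map_one]
  · set S := Finset.Icc (1 - (lam.len : ℤ)) ((lam.part 0 : ℕ) : ℤ) with hS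
    have hdef : sC lam = (2:ℚ)⁻¹ • (sympMat lam lam.len).det := by
      rw [sC, if_neg hn]
      rfl
    have hmap : Delta ((sympMat lam lam.len).det)
        = (Matrix.of fun i j : Fin lam.len => ∑ a ∈ S,
            (fun (i : Fin lam.len) (a : ℤ) => rnR (hZ ((lam.part i : ℤ) - (i : ℤ) - a))) i a *
            (fun (a : ℤ) (j : Fin lam.len) =>
              rnL (hZ (a + (j : ℤ)) + hZ (a - (j : ℤ)))) a j).det := by
      have h1 : Delta ((sympMat lam lam.len).det)
          = (Delta.toRingHom.mapMatrix (sympMat lam lam.len)).det :=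
        RingHom.map_det Delta.toRingHom _
      rw [h1]
      congr 1
      refine Matrix.ext fun i j => ?_
      simp only [RingHom.mapMatrix_apply, Matrix.map_apply, Matrix.of_apply]
      exact entry_eq lam i j
    rw [hdef, _root_.map_smul, hmap,
      cauchy_binet S (fun (i : Fin lam.len) (a : ℤ) => rnR (hZ ((lam.part i : ℤ) - (i : ℤ) - a)))
        (fun (a : ℤ) (j : Fin lam.len) => rnL (hZ (a + (j : ℤ)) + hZ (a - (j : ℤ)))),
      Finset.smul_sum]
    have hterm : ∀ T ∈ S.powersetCard lam.len,
        (2:ℚ)⁻¹ • ((Matrix.of fun i k : Fin lam.len =>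
            rnR (hZ ((lam.part i : ℤ) - (i : ℤ) - enumT lam.len T k))).det *
          (Matrix.of fun k j : Fin lam.len =>
            rnL (hZ (enumT lam.len T k + (j : ℤ)) + hZ (enumT lam.len T k - (j : ℤ)))).det)
        = Gfun lam (muOf lam.len T) := by
      intro T hT
      rw [term_eval lam hn T hT, smul_smul]
      norm_num
    rw [Finset.sum_congr rfl hterm]
    symm
    have hsupport : Function.support (Gfun lam)
        ⊆ ↑((S.powersetCard lam.len).image (muOf lam.len)) := by
      intro mu hmu
      have hsub : mu.Sub lam := by
        by_contra hc
        exact hmu (by rw [Gfun, if_neg hc])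
      simp only [Finset.coe_image, Set.mem_image, Finset.mem_coe]
      refine ⟨Finset.image (fun i : Fin lam.len =>
          (mu.part (Fin.rev i) : ℤ) - ((Fin.rev i : ℕ) : ℤ)) Finset.univ, ?_, ?_⟩
      · rw [Finset.mem_powersetCard]
        constructor
        · intro x hx
          rw [Finset.mem_image] at hx
          obtain ⟨i, _, rfl⟩ := hx
          rw [Finset.mem_Icc]
          have h1 : mu.part (Fin.rev i) ≤ mu.part 0 := mu.anti (Nat.zero_le _)
          have h2 : mu.part 0 ≤ lam.part 0 := hsub 0
          have h3 : ((Fin.rev i : ℕ)) < lam.len := (Fin.rev i).2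
          constructor
          · push_cast
            omega
          · push_cast
            omega
        · rw [Finset.card_image_of_injective _ (gRev_strictMono mu lam.len).injective,
            Finset.card_univ, Fintype.card_fin]
      · exact muOf_eq_self mu lam.len hsub.len_le
    rw [finsum_eq_sum_of_support_subset _ hsupport]
    refine Finset.sum_image ?_
    intro T hT T' hT' h
    rw [Finset.mem_coe, Finset.mem_powersetCard] at hT hT'
    exact muOf_inj hT.2 hT'.2
      (fun x hx => (Finset.mem_Icc.mp (hT.1 hx)).1)
      (fun x hx => (Finset.mem_Icc.mp (hT'.1 hx)).1) h

end MainAssembly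

/-- Branching rule for symplectic Schur functions:
`Δ(s^C_λ) = Σ_{μ ⊆ λ} s^C_μ ⊗ s_{λ/μ}`; equivalently,
`s^C_λ(X ∪ Y) = Σ_{μ ⊆ λ} s^C_μ(X) s_{λ/μ}(Y)`. -/
theorem Delta_sC (lam : Partn) :
    Delta (sC lam) =
      ∑ᶠ (mu : Partn) (_ : mu.Sub lam),
        MvPolynomial.rename Sum.inl (sC mu) *
          MvPolynomial.rename Sum.inr (skewSchur lam mu) := by
  exact Delta_sC' lam

end
end
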